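/- arXiv:2404.03672 — 2 statements merged into one kernel-verified Lean document; each statement's English description precedes it below -/
import Mathlib

section
/- The second derivative of x ↦ -ln F(x) at any x > 0 equals F'(x)((x/2)F(x) + F'(x)) / F(x)², which is strictly positive. -/
noncomputable def F (ξ : ℝ) : ℝ :=
  (1 / Real.sqrt Real.pi) * ∫ s in (0:ℝ)..ξ, Real.exp (-s ^ 2 / 4)

noncomputable def F' (x : ℝ) : ℝ := (1 / Real.sqrt Real.pi) * Real.exp (-x ^ 2 / 4)

/-! `F` is an antiderivative of the Gaussian `F'`, whose own derivative is `-(x/2) F'`. The quotient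
rule gives `(-log F)'' = (F'² - F F'') / F² = F' (x/2 F + F') / F²`, which is positive for `x > 0`
because there `F`, the integral of a positive function over `[0, x]`, is positive. -/

open Real Filter Topology

theorem deriv_deriv_neg_log {f f' : ℝ → ℝ} {f'' x : ℝ}
    (hf : ∀ᶠ t in 𝓝 x, HasDerivAt f (f' t) t) (hf' : HasDerivAt f' f'' x) (hx : f x ≠ 0) :
    deriv (deriv fun t => -log (f t)) x = (f' x ^ 2 - f x * f'') / f x ^ 2 := by
  have hne : ∀ᶠ t in 𝓝 x, f t ≠ 0 := hf.self_of_nhds.continuousAt.eventually_ne hx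
  have hderiv : deriv (fun t => -log (f t)) =ᶠ[𝓝 x] fun t => -(f' t / f t) := by
    filter_upwards [hf, hne] with t hft hnet
    exact (hft.log hnet).neg.deriv
  have hquot : HasDerivAt (fun t => -(f' t / f t)) (-((f'' * f x - f' x * f' x) / f x ^ 2)) x :=
    (hf'.div hf.self_of_nhds hx).neg
  rw [hderiv.deriv_eq, hquot.deriv]
  field_simp
  ring

theorem continuous_exp_neg_sq_div_four : Continuous fun s : ℝ => exp (-s ^ 2 / 4) := by
  fun_prop

theorem hasDerivAt_F (t : ℝ) : HasDerivAt F (F' t) t :=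
  (intervalIntegral.integral_hasDerivAt_right
    (continuous_exp_neg_sq_div_four.intervalIntegrable 0 t)
    (continuous_exp_neg_sq_div_four.stronglyMeasurableAtFilter _ _)
    continuous_exp_neg_sq_div_four.continuousAt).const_mul _

theorem hasDerivAt_F' (t : ℝ) : HasDerivAt F' (-(t / 2) * F' t) t := by
  have hquad : HasDerivAt (fun s : ℝ => -s ^ 2 / 4) (-(t / 2)) t :=
    (((hasDerivAt_pow 2 t).neg).div_const 4).congr_deriv (by ring)
  exact (hquad.exp.const_mul (1 / √π)).congr_deriv (by unfold F'; ring)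

theorem F'_pos (t : ℝ) : 0 < F' t := by
  unfold F'
  positivity

theorem F_pos {t : ℝ} (ht : 0 < t) : 0 < F t := by
  have hint : 0 < ∫ s in (0:ℝ)..t, exp (-s ^ 2 / 4) :=
    intervalIntegral.intervalIntegral_pos_of_pos_on
      (continuous_exp_neg_sq_div_four.intervalIntegrable 0 t) (fun s _ => exp_pos _) ht
  unfold F
  positivity

theorem second_deriv_neg_log_F (x : ℝ) (hx : 0 < x) :
    deriv (deriv (fun t => -Real.log (F t))) x
      = F' x * (x / 2 * F x + F' x) / (F x) ^ 2 ∧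
    0 < F' x * (x / 2 * F x + F' x) / (F x) ^ 2 := by
  have hF := F_pos hx
  refine ⟨?_, by have := F'_pos x; positivity⟩
  rw [deriv_deriv_neg_log (.of_forall hasDerivAt_F) (hasDerivAt_F' x) hF.ne']
  ring
end

section
/- If ξ̄ ∈ Ω satisfies E(ξ̄) ≤ c, then ξₘ ≥ aₘ F⁻¹(e^{-c/(kₘ(u_{m+1}-uₘ))}) and, when u₁ > u₀, ξ₁ ≤ a₀ F⁻¹(1 - e^{-c/(k₀(u₁-u₀))}), while when u₁ = u₀, ξ₁ ≤ (4c/d₁)^{1/2}. -/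
/-- Extension of `ξ = (ξ₁, …, ξₘ)` to indices `0, …, m+1`, with the convention
`ξ_{m+1} = 0` (the value at index `0` is irrelevant: there `F(ξ₀/a₀) = F(+∞) = 1`). -/
def ext (m : ℕ) (ξ : Fin m → ℝ) : ℕ → ℝ :=
  fun i => if h : 1 ≤ i ∧ i ≤ m then ξ ⟨i - 1, by omega⟩ else 0

/-- The Stefan–Dirichlet potential
`E(ξ̄) = -∑_{i=0}^m kᵢ(u_{i+1}-uᵢ) ln(F(ξᵢ/aᵢ) - F(ξ_{i+1}/aᵢ)) + ∑_{i=1}^m dᵢξᵢ²/4`,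
with conventions `F(ξ₀/a₀) = 1`, `ξ_{m+1} = 0` (so `F(ξ_{m+1}/aₘ) = 0`). -/
noncomputable def E (m : ℕ) (u k a d : ℕ → ℝ) (ξ : Fin m → ℝ) : ℝ :=
  (∑ i ∈ Finset.range (m + 1),
    -(k i * (u (i + 1) - u i) *
      Real.log ((if i = 0 then 1 else F (ext m ξ i / a i)) - F (ext m ξ (i + 1) / a i))))
  + ∑ i ∈ Finset.Icc 1 m, d i * (ext m ξ i) ^ 2 / 4

/-- The domain `Ω = {ξ₁ > ξ₂ > ⋯ > ξₘ > 0}`. -/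
def Omega (m : ℕ) : Set (Fin m → ℝ) := {ξ | StrictAnti ξ ∧ ∀ i, 0 < ξ i}

/-!
Every summand of `E` is nonnegative: the arguments of the logarithms lie in `(0, 1]` because
`F` is increasing with values in `[0, 1)` on `[0, ∞)` and `ξ` is decreasing, and their weights
`kᵢ(u_{i+1} - uᵢ)` are nonnegative. Hence each summand is at most `c`. The last logarithmic
summand `-kₘ(u_{m+1} - uₘ) ln F(ξₘ/aₘ) ≤ c` bounds `ξₘ` from below, the first one
`-k₀(u₁ - u₀) ln(1 - F(ξ₁/a₀)) ≤ c` bounds `ξ₁` from above, and when `u₀ = u₁` the quadratic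
summand `d₁ξ₁²/4 ≤ c` does.
-/

open Filter Topology MeasureTheory Finset

lemma integrable_exp_neg_sq_div_four : Integrable fun s : ℝ => Real.exp (-s ^ 2 / 4) := by
  simpa [neg_div, div_eq_inv_mul] using integrable_exp_neg_mul_sq (b := 1 / 4) (by norm_num)

lemma integral_Ioi_exp_neg_sq_div_four :
    ∫ s in Set.Ioi (0 : ℝ), Real.exp (-s ^ 2 / 4) = Real.sqrt Real.pi := by
  have h := integral_gaussian_Ioi (1 / 4)
  simp only [neg_mul, one_div_mul_eq_div, div_div_eq_mul_div, div_one] at h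
  rw [show Real.pi * 4 = 2 ^ 2 * Real.pi by ring, Real.sqrt_mul (by positivity),
    Real.sqrt_sq (by norm_num)] at h
  simpa [neg_div] using h

lemma intervalIntegrable_exp_neg_sq_div_four (x y : ℝ) :
    IntervalIntegrable (fun s : ℝ => Real.exp (-s ^ 2 / 4)) volume x y :=
  (by fun_prop : Continuous fun s : ℝ => Real.exp (-s ^ 2 / 4)).intervalIntegrable x y

lemma F_zero : F 0 = 0 := by simp [F]

lemma continuous_F : Continuous F :=
  continuous_const.mul <|
    intervalIntegral.continuous_primitive intervalIntegrable_exp_neg_sq_div_four 0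

lemma F_strictMono : StrictMono F := by
  intro x y hxy
  have hpos : 0 < ∫ s in x..y, Real.exp (-s ^ 2 / 4) :=
    intervalIntegral.intervalIntegral_pos_of_pos (intervalIntegrable_exp_neg_sq_div_four x y)
      (fun _ => Real.exp_pos _) hxy
  have hdiff : F y - F x = (1 / Real.sqrt Real.pi) * ∫ s in x..y, Real.exp (-s ^ 2 / 4) := by
    rw [F, F, ← mul_sub, intervalIntegral.integral_interval_sub_left
      (intervalIntegrable_exp_neg_sq_div_four 0 y) (intervalIntegrable_exp_neg_sq_div_four 0 x)]
  have : 0 < F y - F x := hdiff ▸ mul_pos (by positivity) hpos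
  linarith

lemma F_pos_s13 {x : ℝ} (hx : 0 < x) : 0 < F x := F_zero ▸ F_strictMono hx

lemma F_nonneg {x : ℝ} (hx : 0 ≤ x) : 0 ≤ F x := F_zero ▸ F_strictMono.monotone hx

lemma tendsto_F_atTop : Tendsto F atTop (𝓝 1) := by
  have h := intervalIntegral_tendsto_integral_Ioi 0
    integrable_exp_neg_sq_div_four.integrableOn tendsto_id
  rw [integral_Ioi_exp_neg_sq_div_four] at h
  have h' := h.const_mul (1 / Real.sqrt Real.pi)
  rwa [one_div_mul_cancel (Real.sqrt_ne_zero'.2 Real.pi_pos)] at h'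

lemma F_lt_one (x : ℝ) : F x < 1 :=
  (F_strictMono (lt_add_one x)).trans_le (F_strictMono.monotone.ge_of_tendsto tendsto_F_atTop _)

lemma F_invFun {y : ℝ} (hy₀ : 0 ≤ y) (hy₁ : y < 1) : F (Function.invFun F y) = y :=
  Function.invFun_eq <| mem_range_of_exists_le_of_exists_ge continuous_F ⟨0, by rwa [F_zero]⟩
    (tendsto_F_atTop.eventually (eventually_ge_nhds hy₁)).exists

lemma invFun_F_le_iff {x y : ℝ} (hy₀ : 0 ≤ y) (hy₁ : y < 1) :
    Function.invFun F y ≤ x ↔ y ≤ F x := by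
  rw [← F_strictMono.le_iff_le, F_invFun hy₀ hy₁]

lemma le_invFun_F_iff {x y : ℝ} (hy₀ : 0 ≤ y) (hy₁ : y < 1) :
    x ≤ Function.invFun F y ↔ F x ≤ y := by
  rw [← F_strictMono.le_iff_le, F_invFun hy₀ hy₁]

lemma exp_neg_div_le_of_neg_mul_log_le {K y c : ℝ} (hK : 0 < K) (hy : 0 < y)
    (h : -(K * Real.log y) ≤ c) : Real.exp (-c / K) ≤ y := by
  rw [← Real.le_log_iff_exp_le hy, div_le_iff₀ hK]
  linarith

section Potential

variable {m : ℕ} {u k a d : ℕ → ℝ} {ξ : Fin m → ℝ}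

lemma ext_of_le {i : ℕ} (h₁ : 1 ≤ i) (h₂ : i ≤ m) : ext m ξ i = ξ ⟨i - 1, by omega⟩ :=
  dif_pos ⟨h₁, h₂⟩

lemma ext_of_lt {i : ℕ} (h : m < i) : ext m ξ i = 0 := dif_neg (by omega)

lemma ext_nonneg (hξ : ξ ∈ Omega m) (i : ℕ) : 0 ≤ ext m ξ i := by
  unfold _root_.ext
  split_ifs
  exacts [(hξ.2 _).le, le_rfl]

lemma ext_pos (hξ : ξ ∈ Omega m) {i : ℕ} (h₁ : 1 ≤ i) (h₂ : i ≤ m) : 0 < ext m ξ i :=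
  ext_of_le h₁ h₂ ▸ hξ.2 _

lemma ext_succ_le (hξ : ξ ∈ Omega m) {i : ℕ} (h₁ : 1 ≤ i) : ext m ξ (i + 1) ≤ ext m ξ i := by
  rcases lt_trichotomy i m with hi | rfl | hi
  · rw [ext_of_le h₁ hi.le, ext_of_le (by omega) hi]
    exact hξ.1.antitone (Fin.mk_le_mk.2 (by omega))
  · rw [ext_of_lt (Nat.lt_succ_self i)]
    exact ext_nonneg hξ i
  · rw [ext_of_lt hi, ext_of_lt (by omega)]

noncomputable def logArg (m : ℕ) (a : ℕ → ℝ) (ξ : Fin m → ℝ) (i : ℕ) : ℝ :=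
  (if i = 0 then 1 else F (ext m ξ i / a i)) - F (ext m ξ (i + 1) / a i)

noncomputable def logTerm (m : ℕ) (u k a : ℕ → ℝ) (ξ : Fin m → ℝ) (i : ℕ) : ℝ :=
  -(k i * (u (i + 1) - u i) * Real.log (logArg m a ξ i))

noncomputable def quadTerm (m : ℕ) (d : ℕ → ℝ) (ξ : Fin m → ℝ) (i : ℕ) : ℝ :=
  d i * ext m ξ i ^ 2 / 4

lemma E_eq_sum_logTerm_add_sum_quadTerm :
    E m u k a d ξ = ∑ i ∈ range (m + 1), logTerm m u k a ξ i + ∑ i ∈ Icc 1 m, quadTerm m d ξ i :=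
  rfl

lemma logArg_zero : logArg m a ξ 0 = 1 - F (ext m ξ 1 / a 0) := rfl

lemma logArg_self (hm : 1 ≤ m) : logArg m a ξ m = F (ext m ξ m / a m) := by
  rw [logArg, if_neg (by omega), ext_of_lt (Nat.lt_succ_self m), zero_div, F_zero, sub_zero]

lemma logArg_nonneg (hξ : ξ ∈ Omega m) {i : ℕ} (ha : 0 < a i) : 0 ≤ logArg m a ξ i := by
  rw [logArg, sub_nonneg]
  split_ifs with hi
  · exact (F_lt_one _).le
  · exact F_strictMono.monotone <| div_le_div_of_nonneg_right (ext_succ_le hξ (by omega)) ha.le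

lemma logArg_le_one (hξ : ξ ∈ Omega m) {i : ℕ} (ha : 0 < a i) : logArg m a ξ i ≤ 1 := by
  have hF : 0 ≤ F (ext m ξ (i + 1) / a i) := F_nonneg (div_nonneg (ext_nonneg hξ _) ha.le)
  have hfirst : (if i = 0 then 1 else F (ext m ξ i / a i)) ≤ 1 := by
    split_ifs
    exacts [le_rfl, (F_lt_one _).le]
  rw [logArg]
  linarith

lemma logTerm_nonneg (hk : ∀ i ≤ m, 0 < k i) (ha : ∀ i ≤ m, 0 < a i) (hu0 : u 0 ≤ u 1)
    (hu : ∀ i, 1 ≤ i → i ≤ m → u i < u (i + 1)) (hξ : ξ ∈ Omega m) {i : ℕ} (hi : i ≤ m) :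
    0 ≤ logTerm m u k a ξ i := by
  have hweight : 0 ≤ k i * (u (i + 1) - u i) := by
    refine mul_nonneg (hk i hi).le (sub_nonneg.2 ?_)
    rcases Nat.eq_zero_or_pos i with rfl | hi₁
    exacts [hu0, (hu i hi₁ hi).le]
  exact neg_nonneg.2 <| mul_nonpos_of_nonneg_of_nonpos hweight <|
    Real.log_nonpos (logArg_nonneg hξ (ha i hi)) (logArg_le_one hξ (ha i hi))

lemma quadTerm_nonneg (hd : ∀ i, 1 ≤ i → i ≤ m → 0 ≤ d i) {i : ℕ} (h₁ : 1 ≤ i) (h₂ : i ≤ m) :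
    0 ≤ quadTerm m d ξ i := by
  unfold quadTerm
  have := hd i h₁ h₂
  positivity

lemma logTerm_le_E (hk : ∀ i ≤ m, 0 < k i) (ha : ∀ i ≤ m, 0 < a i)
    (hd : ∀ i, 1 ≤ i → i ≤ m → 0 ≤ d i) (hu0 : u 0 ≤ u 1)
    (hu : ∀ i, 1 ≤ i → i ≤ m → u i < u (i + 1)) (hξ : ξ ∈ Omega m) {i : ℕ} (hi : i ≤ m) :
    logTerm m u k a ξ i ≤ E m u k a d ξ := by
  rw [E_eq_sum_logTerm_add_sum_quadTerm]
  refine le_add_of_le_of_nonneg ?_ (sum_nonneg fun j hj => ?_)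
  · exact single_le_sum (fun j hj => logTerm_nonneg hk ha hu0 hu hξ (mem_range_succ_iff.1 hj))
      (mem_range_succ_iff.2 hi)
  · rw [mem_Icc] at hj
    exact quadTerm_nonneg hd hj.1 hj.2

lemma quadTerm_le_E (hk : ∀ i ≤ m, 0 < k i) (ha : ∀ i ≤ m, 0 < a i)
    (hd : ∀ i, 1 ≤ i → i ≤ m → 0 ≤ d i) (hu0 : u 0 ≤ u 1)
    (hu : ∀ i, 1 ≤ i → i ≤ m → u i < u (i + 1)) (hξ : ξ ∈ Omega m) {i : ℕ} (h₁ : 1 ≤ i)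
    (h₂ : i ≤ m) : quadTerm m d ξ i ≤ E m u k a d ξ := by
  rw [E_eq_sum_logTerm_add_sum_quadTerm]
  refine le_add_of_nonneg_of_le (sum_nonneg fun j hj => ?_) ?_
  · exact logTerm_nonneg hk ha hu0 hu hξ (mem_range_succ_iff.1 hj)
  · exact single_le_sum (fun j hj => quadTerm_nonneg hd (mem_Icc.1 hj).1 (mem_Icc.1 hj).2)
      (mem_Icc.2 ⟨h₁, h₂⟩)

end Potential

theorem E_sublevel_bounds (m : ℕ) (hm : 1 ≤ m) (u k a d : ℕ → ℝ)
    (hk : ∀ i ≤ m, 0 < k i) (ha : ∀ i ≤ m, 0 < a i)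
    (hd : ∀ i, 1 ≤ i → i ≤ m → 0 ≤ d i)
    (hu0 : u 0 ≤ u 1) (hu : ∀ i, 1 ≤ i → i ≤ m → u i < u (i + 1))
    (hd1 : u 0 = u 1 → 0 < d 1) (c : ℝ)
    (ξ : Fin m → ℝ) (hξ : ξ ∈ Omega m) (hE : E m u k a d ξ ≤ c) :
    a m * Function.invFun F (Real.exp (-c / (k m * (u (m + 1) - u m)))) ≤ ext m ξ m ∧
    (u 0 < u 1 →
      ext m ξ 1 ≤ a 0 * Function.invFun F (1 - Real.exp (-c / (k 0 * (u 1 - u 0))))) ∧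
    (u 0 = u 1 → ext m ξ 1 ≤ Real.sqrt (4 * c / d 1)) := by
  have hlogTerm {i : ℕ} (hi : i ≤ m) : logTerm m u k a ξ i ≤ c :=
    (logTerm_le_E hk ha hd hu0 hu hξ hi).trans hE
  refine ⟨?last, fun hu01 => ?first, fun hu01 => ?quad⟩
  case last =>
    have hF := F_pos_s13 (div_pos (ext_pos hξ hm le_rfl) (ha m le_rfl))
    have hlast := hlogTerm le_rfl
    rw [logTerm, logArg_self hm] at hlast
    have hexp := exp_neg_div_le_of_neg_mul_log_le (mul_pos (hk m le_rfl)
      (sub_pos.2 (hu m hm le_rfl))) hF hlast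
    rwa [← le_div_iff₀' (ha m le_rfl),
      invFun_F_le_iff (Real.exp_pos _).le (hexp.trans_lt (F_lt_one _))]
  case first =>
    have hF := F_pos_s13 (div_pos (ext_pos hξ le_rfl hm) (ha 0 (Nat.zero_le m)))
    have hfirst := hlogTerm (Nat.zero_le m)
    rw [logTerm, logArg_zero] at hfirst
    have hexp := exp_neg_div_le_of_neg_mul_log_le (mul_pos (hk 0 (Nat.zero_le m))
      (sub_pos.2 hu01)) (by linarith [F_lt_one (ext m ξ 1 / a 0)]) hfirst
    rw [← div_le_iff₀' (ha 0 (Nat.zero_le m)), le_invFun_F_iff (by linarith)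
      (by linarith [Real.exp_pos (-c / (k 0 * (u 1 - u 0)))])]
    linarith
  case quad =>
    have hq : d 1 * ext m ξ 1 ^ 2 / 4 ≤ c := (quadTerm_le_E hk ha hd hu0 hu hξ le_rfl hm).trans hE
    refine (le_abs_self _).trans (Real.abs_le_sqrt ?_)
    rw [le_div_iff₀ (hd1 hu01)]
    linarith
end
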